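/- Let v : ℝ² → ℝ be a smooth function and let η : ℝ² → ℝ be a smooth function with compact support. Writing points of ℝ² as (z,y), with ∂_z, ∂_y the corresponding partial derivatives, one has ∫_{ℝ²} ( (∂_y∂_y v)² + 2·(∂_z∂_z v)·(∂_y∂_y v) )·η² dz dy ≥ −∫_{ℝ²} (∂_z v)²·( 4·(∂_z η)² + 2·(∂_y η)² ) dz dy. -/

import Mathlib

open MeasureTheory

/-- Partial derivative with respect to the first variable `z` of a function on `ℝ²`. -/
noncomputable def pz (v : ℝ × ℝ → ℝ) : ℝ × ℝ → ℝ :=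
  fun p => deriv (fun s => v (s, p.2)) p.1

/-- Partial derivative with respect to the second variable `y` of a function on `ℝ²`. -/
noncomputable def py (v : ℝ × ℝ → ℝ) : ℝ × ℝ → ℝ :=
  fun p => deriv (fun s => v (p.1, s)) p.2

section Helpers

variable {v f g F : ℝ × ℝ → ℝ}

lemma pz_eq_fderiv (hv : Differentiable ℝ v) (p : ℝ × ℝ) :
    pz v p = fderiv ℝ v p ((1 : ℝ), (0 : ℝ)) := by
  have h1 : HasDerivAt (fun s : ℝ => (s, p.2)) ((1 : ℝ), (0 : ℝ)) p.1 :=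
    HasDerivAt.prodMk (hasDerivAt_id p.1) (hasDerivAt_const p.1 p.2)
  have h : HasDerivAt (fun s => v (s, p.2)) (fderiv ℝ v p ((1 : ℝ), (0 : ℝ))) p.1 := by
    exact ((hv (p.1, p.2)).hasFDerivAt.comp_hasDerivAt p.1 h1)
  exact h.deriv

lemma py_eq_fderiv (hv : Differentiable ℝ v) (p : ℝ × ℝ) :
    py v p = fderiv ℝ v p ((0 : ℝ), (1 : ℝ)) := by
  have h1 : HasDerivAt (fun s : ℝ => (p.1, s)) ((0 : ℝ), (1 : ℝ)) p.2 :=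
    HasDerivAt.prodMk (hasDerivAt_const p.2 p.1) (hasDerivAt_id p.2)
  have h : HasDerivAt (fun s => v (p.1, s)) (fderiv ℝ v p ((0 : ℝ), (1 : ℝ))) p.2 := by
    exact ((hv (p.1, p.2)).hasFDerivAt.comp_hasDerivAt p.2 h1)
  exact h.deriv

lemma contDiff_pz (hv : ContDiff ℝ (⊤ : ℕ∞) v) : ContDiff ℝ (⊤ : ℕ∞) (pz v) := by
  have : pz v = fun p => (fderiv ℝ v p) ((1 : ℝ), (0 : ℝ)) :=
    funext (pz_eq_fderiv (hv.differentiable (by simp)))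
  rw [this]
  exact (ContinuousLinearMap.apply ℝ ℝ ((1 : ℝ), (0 : ℝ))).contDiff.comp
    (hv.fderiv_right (by simp))

lemma contDiff_py (hv : ContDiff ℝ (⊤ : ℕ∞) v) : ContDiff ℝ (⊤ : ℕ∞) (py v) := by
  have : py v = fun p => (fderiv ℝ v p) ((0 : ℝ), (1 : ℝ)) :=
    funext (py_eq_fderiv (hv.differentiable (by simp)))
  rw [this]
  exact (ContinuousLinearMap.apply ℝ ℝ ((0 : ℝ), (1 : ℝ))).contDiff.comp
    (hv.fderiv_right (by simp))

lemma fderiv2_apply (hv : ContDiff ℝ (⊤ : ℕ∞) v) (p a b : ℝ × ℝ) :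
    fderiv ℝ (fun q => fderiv ℝ v q a) p b = fderiv ℝ (fderiv ℝ v) p b a := by
  rw [fderiv_clm_apply ((hv.fderiv_right (m := (⊤ : ℕ∞)) (by simp)).differentiable (by simp) p)
    (differentiableAt_const a)]
  simp

lemma pz_py_comm (hv : ContDiff ℝ (⊤ : ℕ∞) v) : pz (py v) = py (pz v) := by
  funext p
  have hd : Differentiable ℝ v := hv.differentiable (by simp)
  have hsym := (hv.contDiffAt (x := p)).isSymmSndFDerivAt (by rw [minSmoothness_of_isRCLikeNormedField]; exact WithTop.coe_le_coe.mpr le_top)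
  have e1 : pz (py v) p = fderiv ℝ (fderiv ℝ v) p ((1:ℝ),(0:ℝ)) ((0:ℝ),(1:ℝ)) := by
    rw [pz_eq_fderiv ((contDiff_py hv).differentiable (by simp)) p]
    have : py v = fun q => (fderiv ℝ v q) ((0:ℝ),(1:ℝ)) := funext (py_eq_fderiv hd)
    rw [this, fderiv2_apply hv]
  have e2 : py (pz v) p = fderiv ℝ (fderiv ℝ v) p ((0:ℝ),(1:ℝ)) ((1:ℝ),(0:ℝ)) := by
    rw [py_eq_fderiv ((contDiff_pz hv).differentiable (by simp)) p]
    have : pz v = fun q => (fderiv ℝ v q) ((1:ℝ),(0:ℝ)) := funext (pz_eq_fderiv hd)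
    rw [this, fderiv2_apply hv]
  rw [e1, e2, hsym.eq]

lemma diffat_sz (hf : Differentiable ℝ f) (p : ℝ × ℝ) :
    DifferentiableAt ℝ (fun s => f (s, p.2)) p.1 :=
  (hf.comp (differentiable_id.prodMk (differentiable_const _))).differentiableAt

lemma diffat_sy (hf : Differentiable ℝ f) (p : ℝ × ℝ) :
    DifferentiableAt ℝ (fun s => f (p.1, s)) p.2 :=
  (hf.comp ((differentiable_const _).prodMk differentiable_id)).differentiableAt

lemma pz_mul (hf : Differentiable ℝ f) (hg : Differentiable ℝ g) (p : ℝ × ℝ) :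
    pz (fun q => f q * g q) p = pz f p * g p + f p * pz g p := by
  unfold pz
  exact deriv_mul (diffat_sz hf p) (diffat_sz hg p)

lemma py_mul (hf : Differentiable ℝ f) (hg : Differentiable ℝ g) (p : ℝ × ℝ) :
    py (fun q => f q * g q) p = py f p * g p + f p * py g p := by
  unfold py
  exact deriv_mul (diffat_sy hf p) (diffat_sy hg p)

lemma pz_zero_of_nmem (p : ℝ × ℝ) (hp : p ∉ tsupport F) : pz F p = 0 := by
  have hopen : (tsupport F)ᶜ ∈ nhds p := (isClosed_tsupport F).isOpen_compl.mem_nhds hp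
  have hc : Continuous fun s : ℝ => (s, p.2) := continuous_id.prodMk continuous_const
  have he : (fun s => F (s, p.2)) =ᶠ[nhds p.1] fun _ => (0 : ℝ) := by
    filter_upwards [hc.continuousAt.preimage_mem_nhds (by simpa using hopen)] with s hs
    exact image_eq_zero_of_notMem_tsupport hs
  show deriv (fun s => F (s, p.2)) p.1 = 0
  rw [he.deriv_eq]
  simp

lemma py_zero_of_nmem (p : ℝ × ℝ) (hp : p ∉ tsupport F) : py F p = 0 := by
  have hopen : (tsupport F)ᶜ ∈ nhds p := (isClosed_tsupport F).isOpen_compl.mem_nhds hp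
  have hc : Continuous fun s : ℝ => (p.1, s) := continuous_const.prodMk continuous_id
  have he : (fun s => F (p.1, s)) =ᶠ[nhds p.2] fun _ => (0 : ℝ) := by
    filter_upwards [hc.continuousAt.preimage_mem_nhds (by simpa using hopen)] with s hs
    exact image_eq_zero_of_notMem_tsupport hs
  show deriv (fun s => F (p.1, s)) p.2 = 0
  rw [he.deriv_eq]
  simp

lemma hcs_pz (h : HasCompactSupport F) : HasCompactSupport (pz F) :=
  HasCompactSupport.intro h fun p hp => pz_zero_of_nmem p hp

lemma hcs_py (h : HasCompactSupport F) : HasCompactSupport (py F) :=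
  HasCompactSupport.intro h fun p hp => py_zero_of_nmem p hp

lemma integral_deriv_zero {f : ℝ → ℝ} (hf : ContDiff ℝ 1 f) (h : HasCompactSupport f) :
    ∫ x, deriv f x = 0 := by
  have hi : Integrable (deriv f) :=
    (hf.continuous_deriv le_rfl).integrable_of_hasCompactSupport h.deriv
  rw [← intervalIntegral.integral_Iic_add_Ioi (b := (0:ℝ)) hi.integrableOn hi.integrableOn,
    h.integral_Iic_deriv_eq hf 0, h.integral_Ioi_deriv_eq hf 0]
  ring

lemma integral_pz_zero (hF : ContDiff ℝ (⊤ : ℕ∞) F) (h : HasCompactSupport F) :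
    ∫ p : ℝ × ℝ, pz F p = 0 := by
  have hi : Integrable (pz F) :=
    (contDiff_pz hF).continuous.integrable_of_hasCompactSupport (hcs_pz h)
  rw [show (volume : Measure (ℝ × ℝ)) = volume.prod volume from rfl] at hi ⊢
  rw [integral_prod_symm _ hi]
  have : ∀ y : ℝ, ∫ x : ℝ, pz F (x, y) = 0 := by
    intro y
    have hslice : ContDiff ℝ 1 (fun s : ℝ => F (s, y)) :=
      (hF.of_le (by simp)).comp (contDiff_id.prodMk contDiff_const)
    have hs : HasCompactSupport (fun s : ℝ => F (s, y)) := by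
      refine HasCompactSupport.intro (h.image continuous_fst) fun s hs => ?_
      exact image_eq_zero_of_notMem_tsupport fun hmem => hs ⟨(s, y), hmem, rfl⟩
    exact integral_deriv_zero hslice hs
  simp only [this, integral_zero]

lemma integral_py_zero (hF : ContDiff ℝ (⊤ : ℕ∞) F) (h : HasCompactSupport F) :
    ∫ p : ℝ × ℝ, py F p = 0 := by
  have hi : Integrable (py F) :=
    (contDiff_py hF).continuous.integrable_of_hasCompactSupport (hcs_py h)
  rw [show (volume : Measure (ℝ × ℝ)) = volume.prod volume from rfl] at hi ⊢
  rw [integral_prod _ hi]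
  have : ∀ x : ℝ, ∫ y : ℝ, py F (x, y) = 0 := by
    intro x
    have hslice : ContDiff ℝ 1 (fun s : ℝ => F (x, s)) :=
      (hF.of_le (by simp)).comp (contDiff_const.prodMk contDiff_id)
    have hs : HasCompactSupport (fun s : ℝ => F (x, s)) := by
      refine HasCompactSupport.intro (h.image continuous_snd) fun s hs => ?_
      exact image_eq_zero_of_notMem_tsupport fun hmem => hs ⟨(x, s), hmem, rfl⟩
    exact integral_deriv_zero hslice hs
  simp only [this, integral_zero]

/-- The key pointwise identity: the integrand plus the lower-order term equals an exact
divergence plus a sum of squares. -/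
lemma key_identity {v η : ℝ × ℝ → ℝ} (hv : ContDiff ℝ (⊤ : ℕ∞) v) (hη : ContDiff ℝ (⊤ : ℕ∞) η) (p : ℝ × ℝ) :
    ((py (py v) p) ^ 2 + 2 * (pz (pz v) p) * (py (py v) p)) * (η p) ^ 2
      + (pz v p) ^ 2 * (4 * (pz η p) ^ 2 + 2 * (py η p) ^ 2)
    = 2 * pz (fun q => (pz v q * py (py v) q) * (η q * η q)) p
      - 2 * py (fun q => (pz v q * py (pz v) q) * (η q * η q)) p
      + ((py (py v) p * η p - 2 * pz v p * pz η p) ^ 2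
        + 2 * (py (pz v) p * η p + pz v p * py η p) ^ 2) := by
  have hηd : Differentiable ℝ η := hη.differentiable (by simp)
  have hvzd : Differentiable ℝ (pz v) := (contDiff_pz hv).differentiable (by simp)
  have hvyyd : Differentiable ℝ (py (py v)) :=
    (contDiff_py (contDiff_py hv)).differentiable (by simp)
  have hvzyd : Differentiable ℝ (py (pz v)) :=
    (contDiff_py (contDiff_pz hv)).differentiable (by simp)
  have hA : Differentiable ℝ (fun q => pz v q * py (py v) q) := hvzd.mul hvyyd
  have hA' : Differentiable ℝ (fun q => pz v q * py (pz v) q) := hvzd.mul hvzyd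
  have hB : Differentiable ℝ (fun q => η q * η q) := hηd.mul hηd
  have e1 : pz (fun q => (pz v q * py (py v) q) * (η q * η q)) p
      = (pz (pz v) p * py (py v) p + pz v p * pz (py (py v)) p) * (η p * η p)
        + (pz v p * py (py v) p) * (pz η p * η p + η p * pz η p) := by
    rw [pz_mul hA hB p, pz_mul hvzd hvyyd p, pz_mul hηd hηd p]
  have e2 : py (fun q => (pz v q * py (pz v) q) * (η q * η q)) p
      = (py (pz v) p * py (pz v) p + pz v p * py (py (pz v)) p) * (η p * η p)
        + (pz v p * py (pz v) p) * (py η p * η p + η p * py η p) := by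
    rw [py_mul hA' hB p, py_mul hvzd hvzyd p, py_mul hηd hηd p]
  have e3 : pz (py (py v)) p = py (py (pz v)) p := by
    rw [pz_py_comm (contDiff_py hv), pz_py_comm hv]
  rw [e1, e2, e3]
  ring

end Helpers

/-- Integration-by-parts inequality (est9) in two dimensions: for smooth `v` and a
smooth compactly supported cut-off `η`,
`∫ ((v_yy)² + 2 v_zz v_yy) η² ≥ − ∫ (v_z)² (4 η_z² + 2 η_y²)`. -/
theorem integration_by_parts_inequality (v : ℝ × ℝ → ℝ) (hv : ContDiff ℝ (⊤ : ℕ∞) v)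
    (η : ℝ × ℝ → ℝ) (hη : ContDiff ℝ (⊤ : ℕ∞) η) (hsupp : HasCompactSupport η) :
    (∫ p : ℝ × ℝ,
        ((py (py v) p) ^ 2 + 2 * (pz (pz v) p) * (py (py v) p)) * (η p) ^ 2) ≥
      -∫ p : ℝ × ℝ,
        (pz v p) ^ 2 * (4 * (pz η p) ^ 2 + 2 * (py η p) ^ 2) := by
  have hvz : ContDiff ℝ (⊤ : ℕ∞) (pz v) := contDiff_pz hv
  have hvzz : ContDiff ℝ (⊤ : ℕ∞) (pz (pz v)) := contDiff_pz hvz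
  have hvyy : ContDiff ℝ (⊤ : ℕ∞) (py (py v)) := contDiff_py (contDiff_py hv)
  have hvzy : ContDiff ℝ (⊤ : ℕ∞) (py (pz v)) := contDiff_py hvz
  have hηz : ContDiff ℝ (⊤ : ℕ∞) (pz η) := contDiff_pz hη
  have hηy : ContDiff ℝ (⊤ : ℕ∞) (py η) := contDiff_py hη
  -- names for the relevant functions
  set A : ℝ × ℝ → ℝ := fun p =>
    ((py (py v) p) ^ 2 + 2 * (pz (pz v) p) * (py (py v) p)) * (η p) ^ 2 with hA_def
  set B : ℝ × ℝ → ℝ := fun p =>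
    (pz v p) ^ 2 * (4 * (pz η p) ^ 2 + 2 * (py η p) ^ 2) with hB_def
  set S : ℝ × ℝ → ℝ := fun p =>
    (py (py v) p * η p - 2 * pz v p * pz η p) ^ 2
      + 2 * (py (pz v) p * η p + pz v p * py η p) ^ 2 with hS_def
  set G : ℝ × ℝ → ℝ := fun q => (pz v q * py (py v) q) * (η q * η q) with hG_def
  set H : ℝ × ℝ → ℝ := fun q => (pz v q * py (pz v) q) * (η q * η q) with hH_def
  -- smoothness and compact support of G, H
  have hGsm : ContDiff ℝ (⊤ : ℕ∞) G := (hvz.mul hvyy).mul (hη.mul hη)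
  have hHsm : ContDiff ℝ (⊤ : ℕ∞) H := (hvz.mul hvzy).mul (hη.mul hη)
  have hGcs : HasCompactSupport G := HasCompactSupport.intro hsupp fun p hp => by
    simp [hG_def, image_eq_zero_of_notMem_tsupport hp]
  have hHcs : HasCompactSupport H := HasCompactSupport.intro hsupp fun p hp => by
    simp [hH_def, image_eq_zero_of_notMem_tsupport hp]
  -- integrability
  have iA : Integrable A := by
    refine Continuous.integrable_of_hasCompactSupport ?_ ?_
    · exact ((hvyy.continuous.pow 2).add
        ((continuous_const.mul hvzz.continuous).mul hvyy.continuous)).mul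
        (hη.continuous.pow 2)
    · exact HasCompactSupport.intro hsupp fun p hp => by
        simp [hA_def, image_eq_zero_of_notMem_tsupport hp]
  have iB : Integrable B := by
    refine Continuous.integrable_of_hasCompactSupport ?_ ?_
    · exact (hvz.continuous.pow 2).mul
        ((continuous_const.mul (hηz.continuous.pow 2)).add
          (continuous_const.mul (hηy.continuous.pow 2)))
    · exact HasCompactSupport.intro hsupp fun p hp => by
        simp [hB_def, pz_zero_of_nmem p hp, py_zero_of_nmem p hp]
  have iS : Integrable S := by
    refine Continuous.integrable_of_hasCompactSupport ?_ ?_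
    · exact (((hvyy.continuous.mul hη.continuous).sub
        ((continuous_const.mul hvz.continuous).mul hηz.continuous)).pow 2).add
        (continuous_const.mul
          (((hvzy.continuous.mul hη.continuous).add
            (hvz.continuous.mul hηy.continuous)).pow 2))
    · exact HasCompactSupport.intro hsupp fun p hp => by
        simp [hS_def, image_eq_zero_of_notMem_tsupport hp, pz_zero_of_nmem p hp,
          py_zero_of_nmem p hp]
  have ipzG : Integrable (pz G) :=
    (contDiff_pz hGsm).continuous.integrable_of_hasCompactSupport (hcs_pz hGcs)
  have ipyH : Integrable (py H) :=
    (contDiff_py hHsm).continuous.integrable_of_hasCompactSupport (hcs_py hHcs)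
  -- the divergence terms integrate to zero
  have hIG : ∫ p : ℝ × ℝ, pz G p = 0 := integral_pz_zero hGsm hGcs
  have hIH : ∫ p : ℝ × ℝ, py H p = 0 := integral_py_zero hHsm hHcs
  -- the sum of squares has nonnegative integral
  have hIS : 0 ≤ ∫ p : ℝ × ℝ, S p := integral_nonneg fun p => by
    have : S p = (py (py v) p * η p - 2 * pz v p * pz η p) ^ 2
        + 2 * (py (pz v) p * η p + pz v p * py η p) ^ 2 := rfl
    rw [this]; positivity
  -- key pointwise identity
  have key : ∀ p : ℝ × ℝ, A p + B p = 2 * pz G p - 2 * py H p + S p := fun p =>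
    key_identity hv hη p
  -- put everything together
  have hsum : (∫ p : ℝ × ℝ, A p) + (∫ p : ℝ × ℝ, B p) = ∫ p : ℝ × ℝ, S p := by
    rw [← integral_add iA iB]
    calc ∫ p : ℝ × ℝ, (A p + B p)
        = ∫ p : ℝ × ℝ, (2 * pz G p - 2 * py H p + S p) := by
          exact integral_congr_ae (Filter.Eventually.of_forall key)
      _ = ((2 * ∫ p : ℝ × ℝ, pz G p) - 2 * ∫ p : ℝ × ℝ, py H p) + ∫ p : ℝ × ℝ, S p := by
          have i1 : Integrable (fun p : ℝ × ℝ => 2 * pz G p) := ipzG.const_mul 2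
          have i2 : Integrable (fun p : ℝ × ℝ => 2 * py H p) := ipyH.const_mul 2
          have i3 : Integrable (fun p : ℝ × ℝ => 2 * pz G p - 2 * py H p) := i1.sub i2
          rw [integral_add i3 iS, integral_sub i1 i2,
            integral_const_mul, integral_const_mul]
      _ = ∫ p : ℝ × ℝ, S p := by rw [hIG, hIH]; ring
  have h0 : 0 ≤ (∫ p : ℝ × ℝ, A p) + (∫ p : ℝ × ℝ, B p) := hsum ▸ hIS
  have : -(∫ p : ℝ × ℝ, B p) ≤ ∫ p : ℝ × ℝ, A p := by linarith
  exact this
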